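/- Let σ be a pseudoreflection on ℂ^d of order m fixing the hyperplane H = {z : L(z) = 0} pointwise, where L is a nonzero linear form. If f is a polynomial on ℂ^d satisfying f∘σ⁻¹ = λ f where λ = det(σ)^{-c} for an integer c with 0 ≤ c < m, then L^c divides f. -/
import Mathlib

open MvPolynomial Matrix


lemma aux_single_of_degree_one {σ : Type*} (m : σ →₀ ℕ) (h : m.degree = 1) :
    ∃ j, m = Finsupp.single j 1 := by
  classical
  have hm0 : m ≠ 0 := by
    intro h0; rw [h0, map_zero] at h; exact one_ne_zero h.symm
  obtain ⟨j, hj⟩ := Finsupp.ne_iff.mp hm0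
  simp only [Finsupp.coe_zero, Pi.zero_apply] at hj
  refine ⟨j, ?_⟩
  have hjs : j ∈ m.support := Finsupp.mem_support_iff.mpr hj
  have hle : m j ≤ m.degree := Finset.single_le_sum (fun _ _ => Nat.zero_le _) hjs
  have hj1 : m j = 1 := le_antisymm (h ▸ hle) (Nat.one_le_iff_ne_zero.mpr hj)
  ext k
  by_cases hk : k = j
  · subst hk; simp [hj1]
  · rw [Finsupp.single_apply, if_neg (fun hh => hk hh.symm)]
    by_contra hk0
    have hks : k ∈ m.support := Finsupp.mem_support_iff.mpr hk0
    have hsub : {j, k} ⊆ m.support := by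
      intro x hx; simp at hx; rcases hx with rfl | rfl <;> assumption
    have : m j + m k ≤ m.degree := by
      rw [Finsupp.degree]
      calc m j + m k = ∑ x ∈ {j, k}, m x := by
            rw [Finset.sum_pair (fun hh => hk hh.symm)]
        _ ≤ _ := Finset.sum_le_sum_of_subset hsub
    omega

lemma aux_linear_eq_sum {d : ℕ} (L : MvPolynomial (Fin d) ℂ) (hL1 : L.IsHomogeneous 1) :
    L = ∑ j, C (coeff (Finsupp.single j 1) L) * X j := by
  classical
  ext mo
  rw [coeff_sum]
  simp only [coeff_C_mul, coeff_X']
  by_cases hm : ∃ j, mo = Finsupp.single j 1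
  · obtain ⟨j, rfl⟩ := hm
    rw [Finset.sum_eq_single j]
    · simp
    · intro k _ hk
      rw [if_neg, mul_zero]
      intro hh
      exact hk (Finsupp.single_left_injective one_ne_zero hh)
    · simp
  · have hdeg : mo.degree ≠ 1 := fun hdd => hm (aux_single_of_degree_one mo hdd)
    rw [hL1.coeff_eq_zero hdeg]
    rw [Finset.sum_eq_zero]
    intro k _
    rw [if_neg (fun hh => hm ⟨k, hh.symm⟩), mul_zero]

lemma aux_eval_eq_aeval {d : ℕ} (z : Fin d → ℂ) (p : MvPolynomial (Fin d) ℂ) :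
    eval z p = aeval z p := by
  rw [← coe_aeval_eq_eval]; rfl

lemma aux_eval_aeval {d : ℕ} (z : Fin d → ℂ) (t : Fin d → MvPolynomial (Fin d) ℂ)
    (p : MvPolynomial (Fin d) ℂ) :
    eval z (aeval t p) = eval (fun j => eval z (t j)) p := by
  simp only [aux_eval_eq_aeval]
  exact comp_aeval_apply (R := ℂ) (f := t) (aeval z) p

lemma aux_dvd_of_vanishing {d : ℕ} (L : MvPolynomial (Fin d) ℂ) (hL : L ≠ 0)
    (hL1 : L.IsHomogeneous 1) (g : MvPolynomial (Fin d) ℂ)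
    (hg : ∀ z, eval z L = 0 → eval z g = 0) : L ∣ g := by
  classical
  set a : Fin d → ℂ := fun j => coeff (Finsupp.single j 1) L with ha_def
  have hLsum : L = ∑ j, C (a j) * X j := aux_linear_eq_sum L hL1
  have ha : ∃ i, a i ≠ 0 := by
    by_contra h
    push_neg at h
    apply hL
    rw [hLsum, Finset.sum_eq_zero]
    intro j _; rw [h j, _root_.map_zero, zero_mul]
  obtain ⟨i0, hi0⟩ := ha
  have hCC : C (a i0) * C (a i0)⁻¹ = (1 : MvPolynomial (Fin d) ℂ) := by
    rw [← _root_.map_mul, mul_inv_cancel₀ hi0, _root_.map_one]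
  set t : Fin d → MvPolynomial (Fin d) ℂ :=
    fun j => if j = i0 then X i0 - C (a i0)⁻¹ * L else X j with ht_def
  have htX : ∀ j, t j - X j = if j = i0 then -(C (a i0)⁻¹ * L) else 0 := by
    intro j
    by_cases hj : j = i0
    · subst hj
      have hh : t j = X j - C (a j)⁻¹ * L := by simp [ht_def]
      rw [hh, if_pos rfl]
      ring
    · simp [ht_def, hj]
  -- aeval t L = 0
  have htL : (aeval t) L = 0 := by
    conv_lhs => rw [hLsum]
    rw [_root_.map_sum]
    have heach : ∀ j, (aeval t) (C (a j) * X j) = C (a j) * X j + C (a j) * (t j - X j) := by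
      intro j
      rw [_root_.map_mul, aeval_C, aeval_X, algebraMap_eq]
      ring
    rw [Finset.sum_congr rfl (fun j _ => heach j), Finset.sum_add_distrib, ← hLsum]
    have h2 : ∑ j, C (a j) * (t j - X j) = -L := by
      rw [Finset.sum_eq_single i0]
      · rw [htX, if_pos rfl]
        linear_combination (-L) * hCC
      · intro k _ hk
        rw [htX, if_neg hk, mul_zero]
      · simp
    rw [h2, add_neg_cancel]
  -- aeval t g = 0
  have htg : (aeval t) g = 0 := by
    apply MvPolynomial.funext
    intro z
    rw [aux_eval_aeval, _root_.map_zero]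
    apply hg
    have := congrArg (eval z) htL
    rw [_root_.map_zero, aux_eval_aeval] at this
    exact this
  -- quotient argument
  set I : Ideal (MvPolynomial (Fin d) ℂ) := Ideal.span {L} with hI
  have hmk : (Ideal.Quotient.mkₐ ℂ I).comp (aeval t) = Ideal.Quotient.mkₐ ℂ I := by
    rw [comp_aeval]
    conv_rhs => rw [aeval_unique (Ideal.Quotient.mkₐ ℂ I)]
    congr 1
    funext j
    show Ideal.Quotient.mkₐ ℂ I (t j) = Ideal.Quotient.mkₐ ℂ I (X j)
    simp only [Ideal.Quotient.mkₐ_eq_mk]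
    rw [Ideal.Quotient.eq]
    rw [show t j - X j = if j = i0 then -(C (a i0)⁻¹ * L) else 0 from htX j]
    by_cases hj : j = i0
    · rw [if_pos hj]
      exact I.neg_mem (Ideal.mul_mem_left _ _ (Ideal.subset_span rfl))
    · rw [if_neg hj]; exact I.zero_mem
  have hend : Ideal.Quotient.mkₐ ℂ I g = 0 := by
    have := DFunLike.congr_fun hmk g
    simp only [AlgHom.comp_apply] at this
    rw [← this, htg, _root_.map_zero]
  rw [Ideal.Quotient.mkₐ_eq_mk, Ideal.Quotient.eq_zero_iff_mem, hI,
    Ideal.mem_span_singleton] at hend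
  exact hend


lemma aux_decomp {d : ℕ} (N : Matrix (Fin d) (Fin d) ℂ) (h : N.rank = 1) :
    ∃ u w : Fin d → ℂ, N = Matrix.vecMulVec u w := by
  classical
  rw [Matrix.rank] at h
  obtain ⟨v0, hv0, hspan⟩ := finrank_eq_one_iff'.mp h
  set u : Fin d → ℂ := (v0 : Fin d → ℂ) with hu
  have hcol : ∀ j, ∃ c : ℂ, ∀ i, N i j = c * u i := by
    intro j
    have hmem : N.mulVecLin (Pi.single j 1) ∈ LinearMap.range N.mulVecLin :=
      LinearMap.mem_range_self _ _
    obtain ⟨c, hc⟩ := hspan ⟨_, hmem⟩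
    refine ⟨c, fun i => ?_⟩
    have := congrFun (congrArg Subtype.val hc) i
    simp only [SetLike.mk_smul_mk] at this
    have h2 : N.mulVecLin (Pi.single j 1) i = N i j := by
      simp [Matrix.mulVecLin_apply, Matrix.mulVec_single]
    rw [← h2, ← this]
    simp [hu, mul_comm]
  choose w hw using hcol
  refine ⟨u, w, ?_⟩
  ext i j
  rw [Matrix.vecMulVec_apply, hw j i, mul_comm]

lemma aux_pow {d : ℕ} (σ : Matrix (Fin d) (Fin d) ℂ) (u w : Fin d → ℂ)
    (hσ : σ = 1 - Matrix.vecMulVec u w) (n : ℕ) :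
    σ ^ n = 1 - (∑ i ∈ Finset.range n, (1 - w ⬝ᵥ u) ^ i) • Matrix.vecMulVec u w := by
  set N := Matrix.vecMulVec u w with hN
  set β := w ⬝ᵥ u with hβ
  have hN2 : N * N = β • N := by
    ext i j
    simp only [hN, Matrix.mul_apply, Matrix.vecMulVec_apply, Matrix.smul_apply, smul_eq_mul, hβ,
      dotProduct]
    rw [Finset.sum_mul]
    apply Finset.sum_congr rfl
    intro k _
    ring
  induction n with
  | zero => simp
  | succ n ih =>
    rw [pow_succ, ih, hσ]
    rw [geom_sum_succ]
    set s := ∑ i ∈ Finset.range n, (1 - β) ^ i with hs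
    have expand : (1 - s • N) * (1 - N)
        = (1 - s • N) - (N - s • (N * N)) := by
      rw [mul_sub, mul_one, sub_mul, one_mul, smul_mul_assoc]
    rw [expand, hN2, smul_smul]
    have hfin : (1 : Matrix (Fin d) (Fin d) ℂ) - s • N - (N - (s * β) • N)
        = 1 - ((1 - β) * s + 1) • N := by
      module
    rw [hfin]

lemma aux_order {d : ℕ} (σ : Matrix (Fin d) (Fin d) ℂ) (u w : Fin d → ℂ)
    (hσ : σ = 1 - Matrix.vecMulVec u w) (hNne : Matrix.vecMulVec u w ≠ 0)
    (m : ℕ) (hord : orderOf σ = m) (hm : 0 < m) :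
    σ.det = 1 - w ⬝ᵥ u ∧ ∀ n : ℕ, σ.det ^ n = 1 ↔ m ∣ n := by
  have hdet : σ.det = 1 - w ⬝ᵥ u := by
    have hvv : Matrix.vecMulVec (-u) w = - Matrix.vecMulVec u w := by
      ext i j; simp [Matrix.vecMulVec_apply]
    have hσ' : σ = 1 + Matrix.replicateCol Unit (-u) * Matrix.replicateRow Unit w := by
      rw [← Matrix.vecMulVec_eq Unit, hvv, hσ, sub_eq_add_neg]
    rw [hσ', Matrix.det_one_add_replicateCol_mul_replicateRow, dotProduct_neg, ← sub_eq_add_neg]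
  set δ : ℂ := 1 - w ⬝ᵥ u with hδ
  have h1 : ∀ n : ℕ, σ ^ n = 1 ↔ (∑ i ∈ Finset.range n, δ ^ i) = 0 := by
    intro n
    rw [aux_pow σ u w hσ n]
    constructor
    · intro h
      have h2 : (∑ i ∈ Finset.range n, δ ^ i) • Matrix.vecMulVec u w = 0 := by
        rw [sub_eq_self] at h
        exact h
      rcases smul_eq_zero.mp h2 with h3 | h3
      · exact h3
      · exact absurd h3 hNne
    · intro h; rw [h, zero_smul, sub_zero]
  have hσm : σ ^ m = 1 := hord ▸ pow_orderOf_eq_one σ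
  have hδ1 : δ ≠ 1 := by
    intro hh
    have := (h1 m).mp hσm
    rw [hh] at this
    simp only [one_pow, Finset.sum_const, Finset.card_range, nsmul_eq_mul, mul_one] at this
    exact (Nat.cast_ne_zero (R := ℂ)).mpr hm.ne' this
  refine ⟨hdet, fun n => ?_⟩
  rw [hdet]
  have h2 : δ ^ n = 1 ↔ σ ^ n = 1 := by
    rw [h1 n, geom_sum_eq hδ1, div_eq_zero_iff, sub_eq_zero, sub_eq_zero]
    constructor
    · intro h; exact Or.inl h
    · rintro (h | h)
      · exact h
      · exact absurd h.symm (fun hh => hδ1 hh.symm)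
  rw [h2, ← hord, orderOf_dvd_iff_pow_eq_one]

/-- Let `σ` be a pseudoreflection on `ℂ^d` of order `m` fixing the hyperplane
`H = {z : L(z) = 0}` pointwise, `L` a nonzero linear form. If a polynomial `f` satisfies
`f∘σ⁻¹ = det(σ)^{-c} f` with `0 ≤ c < m`, then `L^c` divides `f`. -/
theorem stmt_4 {d : ℕ} (σ : Matrix (Fin d) (Fin d) ℂ) (m c : ℕ)
    (hσu : IsUnit σ.det) (hord : orderOf σ = m) (hm : 0 < m)
    (hrank : ((1 : Matrix (Fin d) (Fin d) ℂ) - σ).rank = 1)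
    (L : MvPolynomial (Fin d) ℂ) (hL : L ≠ 0) (hL1 : L.IsHomogeneous 1)
    (hker : ∀ z : Fin d → ℂ, σ.mulVec z = z ↔ MvPolynomial.eval z L = 0)
    (f : MvPolynomial (Fin d) ℂ) (hc : c < m)
    (hf : MvPolynomial.aeval
        (fun i => ∑ j, MvPolynomial.C (σ⁻¹ i j) * MvPolynomial.X j) f
      = MvPolynomial.C ((σ.det)⁻¹ ^ c) * f) :
    L ^ c ∣ f := by
  classical
  obtain ⟨u, w, hNuw⟩ := aux_decomp _ hrank
  have hσeq : σ = 1 - Matrix.vecMulVec u w := by rw [← hNuw]; rw [sub_sub_cancel]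
  have hNne : Matrix.vecMulVec u w ≠ 0 := by
    intro h0
    rw [hNuw, h0] at hrank
    rw [Matrix.rank_zero] at hrank
    exact one_ne_zero hrank.symm
  obtain ⟨hdet, hordpow⟩ := aux_order σ u w hσeq hNne m hord hm
  set δ : ℂ := σ.det with hδdef
  have hδ0 : δ ≠ 0 := hσu.ne_zero
  set a : Fin d → ℂ := fun j => coeff (Finsupp.single j 1) L with ha_def
  have hLsum : L = ∑ j, C (a j) * X j := aux_linear_eq_sum L hL1
  have hevalL : ∀ z : Fin d → ℂ, eval z L = a ⬝ᵥ z := by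
    intro z
    rw [hLsum]
    simp [dotProduct]
  have hu0 : u ≠ 0 := by
    intro h; exact hNne (by ext i j; simp [Matrix.vecMulVec_apply, h])
  have hw0 : w ≠ 0 := by
    intro h; exact hNne (by ext i j; simp [Matrix.vecMulVec_apply, h])
  have ha0 : a ≠ 0 := by
    intro h
    apply hL
    rw [hLsum]
    apply Finset.sum_eq_zero
    intro j _
    rw [show a j = 0 from congrFun h j, _root_.map_zero, zero_mul]
  -- the kernel condition in terms of w and a
  have hNz : ∀ z : Fin d → ℂ, (Matrix.vecMulVec u w).mulVec z = (w ⬝ᵥ z) • u := by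
    intro z
    ext i
    simp only [Matrix.mulVec, dotProduct, Matrix.vecMulVec_apply, Pi.smul_apply,
      smul_eq_mul]
    rw [Finset.sum_mul]
    apply Finset.sum_congr rfl
    intro k _
    ring
  have hwa : ∀ z : Fin d → ℂ, w ⬝ᵥ z = 0 ↔ a ⬝ᵥ z = 0 := by
    intro z
    rw [← hevalL, ← hker]
    rw [hσeq, Matrix.sub_mulVec, Matrix.one_mulVec, hNz]
    constructor
    · intro h; rw [h, zero_smul, sub_zero]
    · intro h
      have h2 : (w ⬝ᵥ z) • u = 0 := by
        have := sub_eq_self.mp h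
        exact this
      rcases smul_eq_zero.mp h2 with h3 | h3
      · exact h3
      · exact absurd h3 hu0
  -- a is proportional to w
  obtain ⟨j0, hj0⟩ := Function.ne_iff.mp hw0
  simp only [Pi.zero_apply] at hj0
  set κ : ℂ := a j0 / w j0 with hκ
  have hka : ∀ k, a k = κ * w k := by
    intro k
    set z : Fin d → ℂ := (w j0) • (Pi.single k (1:ℂ) : Fin d → ℂ) - (w k) • (Pi.single j0 (1:ℂ) : Fin d → ℂ) with hz
    have hwz : w ⬝ᵥ z = 0 := by
      rw [hz, dotProduct_sub, dotProduct_smul, dotProduct_smul, dotProduct_single,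
        dotProduct_single]
      simp only [smul_eq_mul, mul_one]
      ring
    have haz : a ⬝ᵥ z = 0 := (hwa z).mp hwz
    rw [hz, dotProduct_sub, dotProduct_smul, dotProduct_smul, dotProduct_single,
      dotProduct_single] at haz
    simp only [smul_eq_mul, mul_one] at haz
    rw [hκ]
    field_simp
    rw [sub_eq_zero] at haz
    rw [mul_comm (a k) (w j0), haz]
    ring
  have hκ0 : κ ≠ 0 := by
    intro h
    apply ha0
    funext k
    rw [hka k, h, zero_mul]
    rfl
  -- a is a left eigenvector of σ with eigenvalue δ
  have hvecmul : a ᵥ* σ = δ • a := by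
    ext j
    simp only [Matrix.vecMul, dotProduct, Pi.smul_apply, smul_eq_mul]
    rw [hσeq]
    simp only [Matrix.sub_apply, Matrix.one_apply, Matrix.vecMulVec_apply]
    have hwu : w ⬝ᵥ u = 1 - δ := by rw [hdet]; ring
    have h1 : ∑ i, a i * ((if i = j then (1:ℂ) else 0) - u i * w j)
        = (∑ i, a i * (if i = j then (1:ℂ) else 0)) - (∑ i, a i * (u i * w j)) := by
      rw [← Finset.sum_sub_distrib]
      apply Finset.sum_congr rfl
      intro k _
      ring
    have h2 : ∑ i, a i * (if i = j then (1:ℂ) else 0) = a j := by simp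
    have h3 : ∑ i, a i * (u i * w j) = κ * (w ⬝ᵥ u) * w j := by
      simp only [dotProduct]
      calc ∑ i, a i * (u i * w j) = ∑ i, κ * (w i * u i) * w j := by
            apply Finset.sum_congr rfl
            intro k _
            rw [hka k]
            ring
        _ = κ * (∑ i, w i * u i) * w j := by
            rw [Finset.mul_sum, Finset.sum_mul]
    rw [h1, h2, h3, hwu, hka j]
    ring
  -- left eigenvector of the inverse
  have hvecmulinv : a ᵥ* σ⁻¹ = δ⁻¹ • a := by
    have h1 : (δ • a) ᵥ* σ⁻¹ = a := by
      rw [← hvecmul, Matrix.vecMul_vecMul, Matrix.mul_nonsing_inv σ hσu, Matrix.vecMul_one]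
    have h2 : δ • (a ᵥ* σ⁻¹) = a := by
      rw [← Matrix.smul_vecMul]
      exact h1
    calc a ᵥ* σ⁻¹ = δ⁻¹ • (δ • (a ᵥ* σ⁻¹)) := by
          rw [smul_smul, inv_mul_cancel₀ hδ0, one_smul]
      _ = δ⁻¹ • a := by rw [h2]
  -- the substitution endomorphism
  set t : Fin d → MvPolynomial (Fin d) ℂ := fun i => ∑ j, C (σ⁻¹ i j) * X j with ht_def
  have hSL : aeval t L = C δ⁻¹ * L := by
    conv_lhs => rw [hLsum]
    rw [_root_.map_sum]
    have heach : ∀ j, (aeval t) (C (a j) * X j) = ∑ k, (C (a j) * C (σ⁻¹ j k)) * X k := by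
      intro j
      rw [_root_.map_mul, aeval_C, aeval_X, algebraMap_eq, ht_def]
      rw [Finset.mul_sum]
      apply Finset.sum_congr rfl
      intro k _
      ring
    rw [Finset.sum_congr rfl (fun j _ => heach j), Finset.sum_comm]
    have hcol : ∀ k, ∑ j, (C (a j) * C (σ⁻¹ j k)) * X k = C (δ⁻¹ * a k) * X k := by
      intro k
      rw [← Finset.sum_mul]
      congr 1
      have : ∑ j, C (a j) * C (σ⁻¹ j k) = (C (∑ j, a j * σ⁻¹ j k) : MvPolynomial (Fin d) ℂ) := by
        rw [_root_.map_sum]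
        apply Finset.sum_congr rfl
        intro j _
        rw [_root_.map_mul]
      rw [this]
      congr 1
      have := congrFun hvecmulinv k
      simp only [Matrix.vecMul, dotProduct, Pi.smul_apply, smul_eq_mul] at this
      exact this
    rw [Finset.sum_congr rfl (fun k _ => hcol k), hLsum, Finset.mul_sum]
    apply Finset.sum_congr rfl
    intro k _
    rw [_root_.map_mul, mul_assoc]
  have heva : ∀ (z : Fin d → ℂ) (p : MvPolynomial (Fin d) ℂ),
      eval z (aeval t p) = eval (σ⁻¹ *ᵥ z) p := by
    intro z p
    rw [aux_eval_aeval]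
    have harg : (fun j => eval z (t j)) = σ⁻¹ *ᵥ z := by
      funext i
      rw [ht_def]
      rw [_root_.map_sum]
      simp only [eval_mul, eval_C, eval_X]
      simp [Matrix.mulVec, dotProduct]
    rw [harg]
  have hfix : ∀ z : Fin d → ℂ, eval z L = 0 → σ⁻¹ *ᵥ z = z := by
    intro z hz
    have h1 : σ *ᵥ z = z := (hker z).mpr hz
    calc σ⁻¹ *ᵥ z = σ⁻¹ *ᵥ (σ *ᵥ z) := by rw [h1]
      _ = (σ⁻¹ * σ) *ᵥ z := by rw [Matrix.mulVec_mulVec]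
      _ = z := by rw [Matrix.nonsing_inv_mul σ hσu, Matrix.one_mulVec]
  -- main induction
  have hC0 : (C δ⁻¹ : MvPolynomial (Fin d) ℂ) ≠ 0 := by
    simpa using inv_ne_zero hδ0
  suffices H : ∀ c' : ℕ, c' < m → ∀ f' : MvPolynomial (Fin d) ℂ,
      aeval t f' = C (δ⁻¹ ^ c') * f' → L ^ c' ∣ f' from H c hc f hf
  intro c'
  induction c' with
  | zero =>
    intro _ f' _
    simpa using one_dvd f'
  | succ n ih =>
    intro hn f' hf'
    have hδn1 : (δ⁻¹ : ℂ) ^ (n + 1) ≠ 1 := by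
      intro h
      rw [inv_pow, inv_eq_one] at h
      have hdvd := (hordpow (n + 1)).mp h
      have := Nat.le_of_dvd (Nat.succ_pos n) hdvd
      omega
    have hvan : ∀ z, eval z L = 0 → eval z f' = 0 := by
      intro z hz
      have h1 : eval z (aeval t f') = eval z f' := by rw [heva, hfix z hz]
      rw [hf', _root_.map_mul, eval_C] at h1
      by_contra hne
      exact hδn1 (mul_right_cancel₀ hne (h1.trans (one_mul (eval z f')).symm))
    obtain ⟨g, rfl⟩ := aux_dvd_of_vanishing L hL hL1 f' hvan
    have hfg : (C δ⁻¹ * L) * aeval t g = C (δ⁻¹ ^ (n + 1)) * (L * g) := by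
      rw [← hSL, ← _root_.map_mul]
      exact hf'
    have hg' : aeval t g = C (δ⁻¹ ^ n) * g := by
      have e1 : C δ⁻¹ * (L * aeval t g) = C δ⁻¹ * (C (δ⁻¹ ^ n) * (L * g)) := by
        calc C δ⁻¹ * (L * aeval t g) = (C δ⁻¹ * L) * aeval t g := by ring
          _ = C (δ⁻¹ ^ (n + 1)) * (L * g) := hfg
          _ = C δ⁻¹ * (C (δ⁻¹ ^ n) * (L * g)) := by
              rw [pow_succ, _root_.map_mul]
              ring
      have e2 := mul_left_cancel₀ hC0 e1
      have e3 : L * aeval t g = L * (C (δ⁻¹ ^ n) * g) := by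
        rw [e2]
        ring
      exact mul_left_cancel₀ hL e3
    obtain ⟨q, hq⟩ := ih (Nat.lt_of_succ_lt hn) g hg'
    exact ⟨q, by rw [hq]; ring⟩
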